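/- arXiv:1608.01701 — 2 statements merged into one kernel-verified Lean document; each statement's English description precedes it below -/
import Mathlib

section
/- Let A and B be spectra of topological spaces with structure maps α_n : A_n → Ω A_{n+1} and β_n : B_n → Ω B_{n+1}, such that each adjoint structure map Σ A_n → A_{n+1} is a cofibration. If T = (T_n : A_n → B_n) is a sequence of pointed maps such that β_n ∘ T_n is pointed-homotopic to (Ω T_{n+1}) ∘ α_n for all n, then there exists a strict spectrum map T̃ (i.e. β_n ∘ T̃_n = (Ω T̃_{n+1}) ∘ α_n strictly, in adjoint form T̃_{n+1} ∘ α_n^{ad} = β_n^{ad} ∘ Σ T̃_n) with each T̃_n pointed-homotopic to T_n. -/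
/-!
The strictification is built by induction on the level. Suppose `T'ₙ ≃ Tₙ` rel the basepoint
has been constructed. Composing with the given weak commutativity homotopy yields a pointed homotopy
`Ω Tₙ₊₁ ∘ αₙ ≃ βₙ ∘ T'ₙ`, whose adjoint is a homotopy `Σ Aₙ × I → Bₙ₊₁` from `Tₙ₊₁ ∘ αₙᵃᵈ` to
`βₙᵃᵈ ∘ Σ T'ₙ`. Since `αₙᵃᵈ` is a cofibration, it extends to a homotopy of `Tₙ₊₁`, stationary at
the basepoint; its end is `T'ₙ₊₁`, which then satisfies `T'ₙ₊₁ ∘ αₙᵃᵈ = βₙᵃᵈ ∘ Σ T'ₙ` on the nose.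
-/

noncomputable section

/-- The based loop space of a pointed space, as a subspace of `C(I, Y)`. -/
def Loop (Y : Type) [TopologicalSpace Y] (y : Y) : Type :=
  {γ : C(unitInterval, Y) // γ 0 = y ∧ γ 1 = y}

instance (Y : Type) [TopologicalSpace Y] (y : Y) : TopologicalSpace (Loop Y y) :=
  instTopologicalSpaceSubtype

/-- The constant loop, the basepoint of the loop space. -/
def Loop.const (Y : Type) [TopologicalSpace Y] (y : Y) : Loop Y y :=
  ⟨ContinuousMap.const _ y, rfl, rfl⟩

/-- Functoriality of the loop space: `Ω f`. -/
def Loop.map {Y Z : Type} [TopologicalSpace Y] [TopologicalSpace Z] (f : C(Y, Z)) {y : Y} {z : Z}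
    (hf : f y = z) : C(Loop Y y, Loop Z z) :=
  ⟨fun γ => ⟨f.comp γ.1, by simp [γ.2.1, hf], by simp [γ.2.2, hf]⟩, by
    apply Continuous.subtype_mk
    exact (ContinuousMap.continuous_postcomp f).comp continuous_subtype_val⟩

/-- The relation defining the reduced suspension of a pointed space: collapse the two ends
of the cylinder and the segment over the basepoint. -/
def SuspRel (X : Type) [TopologicalSpace X] (x₀ : X) (p q : X × unitInterval) : Prop :=
  (p.2 = 0 ∧ q.2 = 0) ∨ (p.2 = 1 ∧ q.2 = 1) ∨ (p.1 = x₀ ∧ q.1 = x₀) ∨ p = q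

/-- The reduced suspension `Σ X` of a pointed space. -/
def Susp (X : Type) [TopologicalSpace X] (x₀ : X) : Type :=
  Quot (SuspRel X x₀)

instance (X : Type) [TopologicalSpace X] (x₀ : X) : TopologicalSpace (Susp X x₀) := by
  unfold Susp; infer_instance

/-- The basepoint of the reduced suspension. -/
def Susp.pt (X : Type) [TopologicalSpace X] (x₀ : X) : Susp X x₀ :=
  Quot.mk _ (x₀, 0)

/-- A map is a cofibration if it has the homotopy extension property with respect to
every space. -/
def IsCofibration {X Y : Type} [TopologicalSpace X] [TopologicalSpace Y] (i : C(X, Y)) : Prop :=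
  ∀ (Z : Type) [TopologicalSpace Z] (g : C(Y, Z)) (H : C(X × unitInterval, Z)),
    (∀ x, H (x, 0) = g (i x)) →
    ∃ G : C(Y × unitInterval, Z), (∀ y, G (y, 0) = g y) ∧ ∀ x t, G (i x, t) = H (x, t)

theorem exists_dependent_seq_of_forall_exists_succ {X : ℕ → Type*} (P : ∀ n, X n → Prop)
    (R : ∀ n, X n → X (n + 1) → Prop) (x₀ : X 0) (h₀ : P 0 x₀)
    (h : ∀ n x, P n x → ∃ y, P (n + 1) y ∧ R n x y) :
    ∃ f : ∀ n, X n, ∀ n, P n (f n) ∧ R n (f n) (f (n + 1)) := by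
  choose next hnext using h
  let f : ∀ n, {x // P n x} :=
    fun n => Nat.rec ⟨x₀, h₀⟩ (fun n x => ⟨next n x x.2, (hnext n x x.2).1⟩) n
  exact ⟨fun n => (f n).1, fun n => ⟨(f n).2, (hnext n _ (f n).2).2⟩⟩

namespace Loop

variable {X P Y : Type} [TopologicalSpace X] [TopologicalSpace P] [LocallyCompactSpace P]
  [TopologicalSpace Y] {x₀ : X} {y₀ : Y}

def suspAdjoint (F : C(P × X, Loop Y y₀)) (hF : ∀ p, F (p, x₀) = Loop.const Y y₀) :
    C(Susp X x₀ × P, Y) where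
  toFun q := Quot.liftOn q.1 (fun xt => (F (q.2, xt.1)).1 xt.2) <| by
    rintro ⟨x, t⟩ ⟨x', t'⟩ (⟨rfl, rfl⟩ | ⟨rfl, rfl⟩ | ⟨rfl, rfl⟩ | h)
    · exact (F (q.2, x)).2.1.trans (F (q.2, x')).2.1.symm
    · exact (F (q.2, x)).2.2.trans (F (q.2, x')).2.2.symm
    · simp only [hF]; rfl
    · rw [h]
  continuous_toFun := isQuotientMap_quot_mk.continuous_lift_prod_left <|
    continuous_eval.comp <|
      ((continuous_subtype_val.comp (F.continuous.comp (by fun_prop))).prodMk (by fun_prop))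

theorem map_const {Z : Type} [TopologicalSpace Z] (f : C(Y, Z)) {z : Z} (hf : f y₀ = z) :
    Loop.map f hf (Loop.const Y y₀) = Loop.const Z z :=
  Subtype.ext (ContinuousMap.ext fun _ => hf)

end Loop

theorem IsCofibration.exists_homotopicRel_of_stationary {X Y Z : Type} [TopologicalSpace X]
    [TopologicalSpace Y] [TopologicalSpace Z] {i : C(X, Y)} (hi : IsCofibration i) {x₀ : X}
    {g : C(Y, Z)} (H : C(X × unitInterval, Z)) (h₀ : ∀ x, H (x, 0) = g (i x))
    (hx₀ : ∀ t, H (x₀, t) = g (i x₀)) :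
    ∃ g' : C(Y, Z), g'.HomotopicRel g {i x₀} ∧ ∀ x, g' (i x) = H (x, 1) := by
  obtain ⟨G, hG₀, hGi⟩ := hi Z g H h₀
  let K : g.HomotopyRel (G.comp (.prodMk (.id Y) (.const Y 1))) {i x₀} :=
    { toContinuousMap := G.comp .prodSwap
      map_zero_left := hG₀
      map_one_left := fun _ => rfl
      prop' := fun t y hy => by
        rw [Set.mem_singleton_iff.mp hy]
        exact (hGi x₀ t).trans (hx₀ t) }
  exact ⟨_, ⟨K.symm⟩, fun x => hGi x 1⟩

theorem exists_strict_of_homotopicRel_loop_map {X Y X' Y' : Type} [TopologicalSpace X]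
    [TopologicalSpace Y] [TopologicalSpace X'] [TopologicalSpace Y'] {x₀ : X} {y₀ : Y}
    {x₀' : X'} {y₀' : Y'} {α : C(X, Loop X' x₀')} (hα : α x₀ = Loop.const _ _)
    {β : C(Y, Loop Y' y₀')} {αad : C(Susp X x₀, X')} (hαadpt : αad (Susp.pt X x₀) = x₀')
    (hadjA : ∀ x t, (α x).1 t = αad (Quot.mk _ (x, t))) {βad : C(Susp Y y₀, Y')}
    (hadjB : ∀ y t, (β y).1 t = βad (Quot.mk _ (y, t))) (hcof : IsCofibration αad)
    {T : C(X', Y')} (hT : T x₀' = y₀') {f : C(X, Y)}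
    (h : ((Loop.map T hT).comp α).HomotopicRel (β.comp f) {x₀}) :
    ∃ g : C(X', Y'), g.HomotopicRel T {x₀'} ∧
      ∀ x t, g (αad (Quot.mk _ (x, t))) = βad (Quot.mk _ (f x, t)) := by
  obtain ⟨H⟩ := h
  have hHpt : ∀ s, H (s, x₀) = Loop.const Y' y₀' := fun s =>
    (H.eq_fst s rfl).trans ((congrArg (Loop.map T hT) hα).trans (Loop.map_const T hT))
  obtain ⟨g, hg, hgH⟩ := hcof.exists_homotopicRel_of_stationary (x₀ := Susp.pt X x₀)
    (g := T) (Loop.suspAdjoint H.toContinuousMap hHpt)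
    (Quot.ind fun ⟨x, t⟩ => by
      show (H (0, x)).1 t = T (αad _)
      rw [H.apply_zero]
      exact congrArg T (hadjA x t))
    (fun s => by
      show (H (s, x₀)).1 0 = T (αad (Susp.pt X x₀))
      rw [hαadpt, hT]
      exact (H (s, x₀)).2.1)
  rw [hαadpt] at hg
  refine ⟨g, hg, fun x t => (hgH (Quot.mk _ (x, t))).trans ?_⟩
  show (H (1, x)).1 t = _
  rw [H.apply_one]
  exact hadjB (f x) t

theorem strictification_of_weak_spectrum_map_general
    (A B : ℕ → Type) [∀ n, TopologicalSpace (A n)] [∀ n, TopologicalSpace (B n)]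
    (a : ∀ n, A n) (b : ∀ n, B n)
    -- structure maps of the spectra, in loop form, pointed
    (α : ∀ n, C(A n, Loop (A (n + 1)) (a (n + 1)))) (hα : ∀ n, α n (a n) = Loop.const _ _)
    (β : ∀ n, C(B n, Loop (B (n + 1)) (b (n + 1))))
    -- the adjoint structure maps, pointed, compatible with the loop form
    (αad : ∀ n, C(Susp (A n) (a n), A (n + 1)))
    (hαadpt : ∀ n, αad n (Susp.pt (A n) (a n)) = a (n + 1))
    (hadjA : ∀ n (x : A n) (t : unitInterval), (α n x).1 t = αad n (Quot.mk _ (x, t)))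
    (βad : ∀ n, C(Susp (B n) (b n), B (n + 1)))
    (hadjB : ∀ n (x : B n) (t : unitInterval), (β n x).1 t = βad n (Quot.mk _ (x, t)))
    -- the adjoint structure maps of `A` are cofibrations
    (hcof : ∀ n, IsCofibration (αad n))
    -- a weak spectrum map `T`
    (T : ∀ n, C(A n, B n)) (hT : ∀ n, T n (a n) = b n)
    (hweak : ∀ n, Nonempty
      (((β n).comp (T n)).HomotopyRel ((Loop.map (T (n + 1)) (hT (n + 1))).comp (α n)) {a n})) :
    -- there is a strictification
    ∃ T' : ∀ n, C(A n, B n),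
      (∀ n, T' n (a n) = b n) ∧
      (∀ n, Nonempty ((T' n).HomotopyRel (T n) {a n})) ∧
      (∀ n (x : A n) (t : unitInterval),
        T' (n + 1) (αad n (Quot.mk _ (x, t))) = βad n (Quot.mk _ (T' n x, t))) := by
  obtain ⟨T', hT'⟩ := exists_dependent_seq_of_forall_exists_succ
    (fun n (f : C(A n, B n)) => f.HomotopicRel (T n) {a n})
    (fun n f g => ∀ x t, g (αad n (Quot.mk _ (x, t))) = βad n (Quot.mk _ (f x, t)))
    (T 0) (.refl _) fun n f hf =>
      exists_strict_of_homotopicRel_loop_map (hα n) (hαadpt n) (hadjA n) (hadjB n) (hcof n)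
        (hT (n + 1)) <|
          (ContinuousMap.HomotopicRel.symm (hweak n)).trans (hf.symm.comp_continuousMap (β n))
  exact ⟨T', fun n => ((hT' n).1.fst_eq_snd rfl).trans (hT n), fun n => (hT' n).1,
    fun n => (hT' n).2⟩

/-- strictification of weak spectrum maps. -/
theorem strictification_of_weak_spectrum_map
    (A B : ℕ → Type) [∀ n, TopologicalSpace (A n)] [∀ n, TopologicalSpace (B n)]
    (a : ∀ n, A n) (b : ∀ n, B n)
    -- structure maps of the spectra, in loop form, pointed
    (α : ∀ n, C(A n, Loop (A (n + 1)) (a (n + 1)))) (hα : ∀ n, α n (a n) = Loop.const _ _)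
    (β : ∀ n, C(B n, Loop (B (n + 1)) (b (n + 1)))) (hβ : ∀ n, β n (b n) = Loop.const _ _)
    -- the adjoint structure maps, pointed, compatible with the loop form
    (αad : ∀ n, C(Susp (A n) (a n), A (n + 1)))
    (hαadpt : ∀ n, αad n (Susp.pt (A n) (a n)) = a (n + 1))
    (hadjA : ∀ n (x : A n) (t : unitInterval), (α n x).1 t = αad n (Quot.mk _ (x, t)))
    (βad : ∀ n, C(Susp (B n) (b n), B (n + 1)))
    (hβadpt : ∀ n, βad n (Susp.pt (B n) (b n)) = b (n + 1))
    (hadjB : ∀ n (x : B n) (t : unitInterval), (β n x).1 t = βad n (Quot.mk _ (x, t)))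
    -- the adjoint structure maps of `A` are cofibrations
    (hcof : ∀ n, IsCofibration (αad n))
    -- a weak spectrum map `T`
    (T : ∀ n, C(A n, B n)) (hT : ∀ n, T n (a n) = b n)
    (hweak : ∀ n, Nonempty
      (((β n).comp (T n)).HomotopyRel ((Loop.map (T (n + 1)) (hT (n + 1))).comp (α n)) {a n})) :
    -- there is a strictification
    ∃ T' : ∀ n, C(A n, B n),
      (∀ n, T' n (a n) = b n) ∧
      (∀ n, Nonempty ((T' n).HomotopyRel (T n) {a n})) ∧
      (∀ n (x : A n) (t : unitInterval),
        T' (n + 1) (αad n (Quot.mk _ (x, t))) = βad n (Quot.mk _ (T' n x, t))) :=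
  strictification_of_weak_spectrum_map_general A B a b α hα β αad hαadpt hadjA βad hadjB hcof T hT
    hweak
end
end

section
/- Moreover, the element ψ = 2^{−d/2} Π_{i=1}^d (1 − e_i c_i) ∈ Cl(V ⊕ V) is independent of the choice of orthonormal basis (v_1,…,v_d) of V used to define it: it is invariant under permutations of the basis vectors and under simultaneous rotation of any pair (v_1, v_2) in both Clifford factors, and such transformations generate O(V). -/
/-!
The elements `Tᵢ = e(bᵢ) c(bᵢ)` commute pairwise and square to `-1`. Hence `∏ᵢ (1 - Tᵢ)` is the
image of a symmetric polynomial under an algebra map `Xᵢ ↦ Tᵢ`, and by Newton's identities (over a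
field of characteristic zero) it is determined by the power sums `∑ᵢ Tᵢ ^ m`. As `Tᵢ² = -1`, these
power sums are `±d` or `±∑ᵢ e(bᵢ) c(bᵢ)`, and the latter is the contraction of the bilinear map
`(v, w) ↦ e v * c w` against the inner product, which does not depend on the orthonormal basis.
-/

noncomputable section

/-- The element `2^{−d/2} Π_i (1 − e(b_i) c(b_i))` built from an orthonormal basis `b`. -/
def psiOfBasis {V A : Type} [NormedAddCommGroup V] [InnerProductSpace ℝ V]
    [Ring A] [Algebra ℝ A] (d : ℕ) (c e : V →ₗ[ℝ] A) (b : OrthonormalBasis (Fin d) ℝ V) : A :=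
  ((2 : ℝ) ^ (-(d : ℝ) / 2)) • (List.ofFn fun i => (1 : A) - e (b i) * c (b i)).prod

namespace MvPolynomial

open Finset

open scoped IsMulCommutative in
theorem exists_algHom_X_eq_of_pairwise_commute {σ R A : Type*} [CommSemiring R] [Semiring A]
    [Algebra R A] (t : σ → A) (ht : Pairwise fun i j => Commute (t i) (t j)) :
    ∃ φ : MvPolynomial σ R →ₐ[R] A, ∀ i, φ (X i) = t i := by
  have : IsMulCommutative (Algebra.adjoin R (Set.range t)) := by
    refine Algebra.isMulCommutative_adjoin R ?_
    rintro _ ⟨i, rfl⟩ _ ⟨j, rfl⟩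
    rcases eq_or_ne i j with rfl | hij
    · rfl
    · exact ht hij
  exact ⟨(Algebra.adjoin R (Set.range t)).val.comp
    (aeval fun i => ⟨t i, Algebra.subset_adjoin ⟨i, rfl⟩⟩), fun i => by simp⟩

theorem IsSymmetric.algHom_eq_of_esymm_eq {σ R A : Type*} [Fintype σ] [CommRing R]
    [Semiring A] [Algebra R A] {φ ψ : MvPolynomial σ R →ₐ[R] A}
    (h : ∀ k, φ (esymm σ R k) = ψ (esymm σ R k)) {p : MvPolynomial σ R} (hp : p.IsSymmetric) :
    φ p = ψ p := by
  obtain ⟨q, hq⟩ := esymmAlgHom_surjective R (le_refl (Fintype.card σ)) ⟨p, hp⟩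
  have hcomp : φ.comp ((symmetricSubalgebra σ R).val.comp (esymmAlgHom σ R _)) =
      ψ.comp ((symmetricSubalgebra σ R).val.comp (esymmAlgHom σ R (Fintype.card σ))) :=
    algHom_ext fun i => by simpa [esymmAlgHom] using h _
  simpa [hq] using congr($hcomp q)

theorem isSymmetric_prod_one_sub_X {σ R : Type*} [Fintype σ] [CommRing R] :
    (∏ i : σ, (1 - X i : MvPolynomial σ R)).IsSymmetric := by
  intro e
  simp only [map_prod, map_sub, map_one, rename_X]
  exact Fintype.prod_equiv e _ _ fun _ => rfl

theorem algHom_prod_one_sub_X {R A : Type*} [CommRing R] [Ring A] [Algebra R A] {d : ℕ}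
    (φ : MvPolynomial (Fin d) R →ₐ[R] A) :
    φ (∏ i, (1 - X i)) = (List.ofFn fun i => 1 - φ (X i)).prod := by
  rw [← List.prod_ofFn, map_list_prod, List.map_ofFn]
  simp [Function.comp_def]

theorem algHom_esymm_eq_of_psum_eq {σ R A : Type*} [Fintype σ] [Field R] [CharZero R] [Ring A]
    [Algebra R A] {φ ψ : MvPolynomial σ R →ₐ[R] A} (h : ∀ m, φ (psum σ R m) = ψ (psum σ R m))
    (k : ℕ) : φ (esymm σ R k) = ψ (esymm σ R k) := by
  induction k using Nat.strong_induction_on with | _ k ih =>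
  rcases k.eq_zero_or_pos with rfl | hk
  · simp only [esymm_zero, map_one]
  have hunit : IsUnit (k : A) := by
    rw [← map_natCast (algebraMap R A)]
    exact (Nat.cast_ne_zero.mpr hk.ne').isUnit.map _
  have newton : φ (k * esymm σ R k) = ψ (k * esymm σ R k) := by
    simp only [mul_esymm_eq_sum, map_mul, map_sum, map_pow, map_neg, map_one]
    congr 1
    refine sum_congr rfl fun a ha => ?_
    rw [ih a.1 (mem_filter.mp ha).2, h]
  simp only [map_mul, map_natCast] at newton
  exact hunit.mul_left_cancel newton

end MvPolynomial

theorem pow_eq_neg_one_pow_mul_pow_mod_two {A : Type*} [Ring A] {x : A} (hx : x * x = -1)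
    (m : ℕ) : x ^ m = (-1) ^ (m / 2) * x ^ (m % 2) := by
  conv_lhs => rw [← Nat.div_add_mod m 2, pow_add, pow_mul, sq, hx]

open RealInnerProductSpace

theorem OrthonormalBasis.sum_bilin_apply_self_eq {ι ι' V M : Type*} [Fintype ι] [Fintype ι']
    [NormedAddCommGroup V] [InnerProductSpace ℝ V] [AddCommGroup M] [Module ℝ M]
    (β : V →ₗ[ℝ] V →ₗ[ℝ] M) (b : OrthonormalBasis ι ℝ V) (b' : OrthonormalBasis ι' ℝ V) :
    ∑ i, β (b i) (b i) = ∑ j, β (b' j) (b' j) := by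
  calc ∑ i, β (b i) (b i) = ∑ i, β (b i) (∑ j, ⟪b' j, b i⟫ • b' j) := by
        simp only [b'.sum_repr']
    _ = ∑ j, β (∑ i, ⟪b i, b' j⟫ • b i) (b' j) := by
        simp only [map_sum, map_smul, LinearMap.sum_apply, LinearMap.smul_apply, real_inner_comm]
        exact Finset.sum_comm
    _ = ∑ j, β (b' j) (b' j) := by simp only [b.sum_repr']

section Clifford

variable {V A : Type*} [NormedAddCommGroup V] [InnerProductSpace ℝ V] [Ring A] [Algebra ℝ A]
  {c e : V →ₗ[ℝ] A}

theorem clifford_mul_self (hc : ∀ v w : V, c v * c w + c w * c v = algebraMap ℝ A (-2 * ⟪v, w⟫))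
    (v : V) : c v * c v = algebraMap ℝ A (-⟪v, v⟫) := by
  have htwo : IsUnit (2 : A) := by
    rw [← map_ofNat (algebraMap ℝ A) 2]
    exact (two_ne_zero (α := ℝ)).isUnit.map _
  refine htwo.mul_left_cancel ?_
  calc 2 * (c v * c v) = c v * c v + c v * c v := two_mul _
    _ = algebraMap ℝ A (-2 * ⟪v, v⟫) := hc v v
    _ = 2 * algebraMap ℝ A (-⟪v, v⟫) := by rw [neg_mul, ← mul_neg, map_mul, map_ofNat]

theorem clifford_anticomm_of_inner_eq_zero
    (hc : ∀ v w : V, c v * c w + c w * c v = algebraMap ℝ A (-2 * ⟪v, w⟫)) {v w : V}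
    (hvw : ⟪v, w⟫ = 0) : c v * c w = -(c w * c v) :=
  eq_neg_of_add_eq_zero_left (by rw [hc, hvw, mul_zero, map_zero])

theorem mul_mul_mul_eq_neg_of_anticomm (hce : ∀ v w : V, c v * e w + e w * c v = 0) (v w : V) :
    e v * c v * (e w * c w) = -(e v * e w * (c v * c w)) := by
  rw [mul_assoc, ← mul_assoc (c v), eq_neg_of_add_eq_zero_left (hce v w)]
  noncomm_ring

variable (hcc : ∀ v w : V, c v * c w + c w * c v = algebraMap ℝ A (-2 * ⟪v, w⟫))
  (hee : ∀ v w : V, e v * e w + e w * e v = algebraMap ℝ A (-2 * ⟪v, w⟫))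
  (hce : ∀ v w : V, c v * e w + e w * c v = 0)
include hcc hee hce

theorem commute_clifford_of_inner_eq_zero {v w : V} (hvw : ⟪v, w⟫ = 0) :
    Commute (e v * c v) (e w * c w) := by
  rw [Commute, SemiconjBy, mul_mul_mul_eq_neg_of_anticomm hce, mul_mul_mul_eq_neg_of_anticomm hce,
    clifford_anticomm_of_inner_eq_zero hcc hvw, clifford_anticomm_of_inner_eq_zero hee hvw]
  noncomm_ring

theorem clifford_mul_self_of_inner_self_eq_one {v : V} (hv : ⟪v, v⟫ = 1) :
    e v * c v * (e v * c v) = -1 := by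
  rw [mul_mul_mul_eq_neg_of_anticomm hce, clifford_mul_self hcc, clifford_mul_self hee, hv,
    ← map_mul]
  norm_num

theorem sum_clifford_pow_eq {ι : Type*} [Fintype ι] (b b' : OrthonormalBasis ι ℝ V) (m : ℕ) :
    ∑ i, (e (b i) * c (b i)) ^ m = ∑ i, (e (b' i) * c (b' i)) ^ m := by
  have hpow (b : OrthonormalBasis ι ℝ V) (i : ι) :
      (e (b i) * c (b i)) ^ m = (-1) ^ (m / 2) * (e (b i) * c (b i)) ^ (m % 2) :=
    pow_eq_neg_one_pow_mul_pow_mod_two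
      (clifford_mul_self_of_inner_self_eq_one hcc hee hce (b.inner_eq_one i)) m
  simp only [hpow b, hpow b', ← Finset.mul_sum]
  congr 1
  rcases Nat.mod_two_eq_zero_or_one m with hm | hm <;> rw [hm]
  · simp only [pow_zero]
  · simp only [pow_one]
    exact b.sum_bilin_apply_self_eq ((LinearMap.mul ℝ A).compl₁₂ e c) b'

end Clifford

open MvPolynomial

open RealInnerProductSpace in
theorem psi_independent_of_basis_general
    (d : ℕ) (V A : Type) [NormedAddCommGroup V] [InnerProductSpace ℝ V]
    [Ring A] [Algebra ℝ A]
    -- the two canonical inclusions `V → Cl(V ⊕ V)` with their Clifford relations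
    (c e : V →ₗ[ℝ] A)
    (hcc : ∀ v w : V, c v * c w + c w * c v = algebraMap ℝ A (-2 * ⟪v, w⟫))
    (hee : ∀ v w : V, e v * e w + e w * e v = algebraMap ℝ A (-2 * ⟪v, w⟫))
    (hce : ∀ v w : V, c v * e w + e w * c v = 0) :
    ∀ b b' : OrthonormalBasis (Fin d) ℝ V, psiOfBasis d c e b = psiOfBasis d c e b' := by
  intro b b'
  obtain ⟨φ, hφ⟩ := exists_algHom_X_eq_of_pairwise_commute (R := ℝ)
    (fun i => e (b i) * c (b i))
    fun _ _ hij => commute_clifford_of_inner_eq_zero hcc hee hce (b.orthonormal.2 hij)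
  obtain ⟨φ', hφ'⟩ := exists_algHom_X_eq_of_pairwise_commute (R := ℝ)
    (fun i => e (b' i) * c (b' i))
    fun _ _ hij => commute_clifford_of_inner_eq_zero hcc hee hce (b'.orthonormal.2 hij)
  have hpsum : ∀ m, φ (psum (Fin d) ℝ m) = φ' (psum (Fin d) ℝ m) := fun m => by
    simpa only [psum, map_sum, map_pow, hφ, hφ'] using sum_clifford_pow_eq hcc hee hce b b' m
  have hprod := isSymmetric_prod_one_sub_X.algHom_eq_of_esymm_eq (algHom_esymm_eq_of_psum_eq hpsum)
  simp only [algHom_prod_one_sub_X, hφ, hφ'] at hprod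
  rw [psiOfBasis, psiOfBasis, hprod]

open RealInnerProductSpace in
/-- `ψ` does not depend on the choice of orthonormal basis. -/
theorem psi_independent_of_basis
    (d : ℕ) (V A : Type) [NormedAddCommGroup V] [InnerProductSpace ℝ V]
    [FiniteDimensional ℝ V] (hdim : Module.finrank ℝ V = d)
    [Ring A] [Algebra ℝ A]
    -- the two canonical inclusions `V → Cl(V ⊕ V)` with their Clifford relations
    (c e : V →ₗ[ℝ] A)
    (hcc : ∀ v w : V, c v * c w + c w * c v = algebraMap ℝ A (-2 * ⟪v, w⟫))
    (hee : ∀ v w : V, e v * e w + e w * e v = algebraMap ℝ A (-2 * ⟪v, w⟫))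
    (hce : ∀ v w : V, c v * e w + e w * c v = 0) :
    ∀ b b' : OrthonormalBasis (Fin d) ℝ V, psiOfBasis d c e b = psiOfBasis d c e b' :=
  psi_independent_of_basis_general d V A c e hcc hee hce
end
end
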